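/- Let 𝔾 = (I,Δ) be a discrete quantum semigroup with a right invariant mean 𝔪, and let f ∈ F(𝔾) be such that h := Δ(f) − f⊗1 − 1⊗f belongs to F_b(𝔾×𝔾) (here (f⊗1)(β,γ) = f(β)⊗1_{n(γ)} and (1⊗f)(β,γ) = 1_{n(β)}⊗f(γ)). Then Δ(f) − f⊗1 ∈ F_{b:1}(𝔾×𝔾), and F := (𝔪 ⊗̃ id)(Δ(f) − f⊗1) satisfies sup_{γ∈I} ‖F(γ) − f(γ)‖ ≤ sup_{β,γ∈I} ‖h(β,γ)‖. -/

import Mathlib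

open scoped Matrix.Norms.L2Operator Kronecker ComplexOrder

namespace DQSG

/-- The matrix algebra `M_k(ℂ)`. -/
abbrev Mat (k : ℕ) : Type := Matrix (Fin k) (Fin k) ℂ

/-- `M_k(ℂ) ⊗ M_l(ℂ)`, realized as matrices indexed by `Fin k × Fin l`. -/
abbrev Mat2 (k l : ℕ) : Type := Matrix (Fin k × Fin l) (Fin k × Fin l) ℂ

/-- `M_k(ℂ) ⊗ M_l(ℂ) ⊗ M_p(ℂ)`. -/
abbrev Mat3 (k l p : ℕ) : Type :=
  Matrix (Fin k × Fin l × Fin p) (Fin k × Fin l × Fin p) ℂ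

/-- The function algebra `F(I)` of an index system `(I, n)`. -/
abbrev FI {I : Type*} (n : I → ℕ) : Type _ := ∀ γ : I, Mat (n γ)

/-- The function algebra `F(I × J)`. -/
abbrev FI2 {I J : Type*} (n : I → ℕ) (m : J → ℕ) : Type _ :=
  ∀ (α : I) (β : J), Mat2 (n α) (m β)

/-- The function algebra `F(I × J × K)`. -/
abbrev FI3 {I J K : Type*} (n : I → ℕ) (m : J → ℕ) (p : K → ℕ) : Type _ :=
  ∀ (α : I) (β : J) (γ : K), Mat3 (n α) (m β) (p γ)

/-- The subspace `F_b(I)` of bounded functions in `F(I)` (w.r.t. the operator norm). -/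
noncomputable def Fb {I : Type*} (n : I → ℕ) : Submodule ℂ (FI n) where
  carrier := {f | ∃ C : ℝ, ∀ γ, ‖f γ‖ ≤ C}
  zero_mem' := ⟨0, fun γ => by simp⟩
  add_mem' := by
    rintro f g ⟨C, hC⟩ ⟨D, hD⟩
    exact ⟨C + D, fun γ => (norm_add_le _ _).trans (add_le_add (hC γ) (hD γ))⟩
  smul_mem' := by
    rintro c f ⟨C, hC⟩
    exact ⟨‖c‖ * C, fun γ => by
      rw [Pi.smul_apply, norm_smul]
      exact mul_le_mul_of_nonneg_left (hC γ) (norm_nonneg c)⟩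

/-- `F_{b:1}(I × J)`: functions bounded in the first variable, for each fixed
second variable. -/
def Fb1 {I J : Type*} {n : I → ℕ} {m : J → ℕ} (f : FI2 n m) : Prop :=
  ∀ β : J, ∃ C : ℝ, ∀ α : I, ‖f α β‖ ≤ C

/-- `F_{b:2}(I × J)`: functions bounded in the second variable, for each fixed
first variable. -/
def Fb2 {I J : Type*} {n : I → ℕ} {m : J → ℕ} (f : FI2 n m) : Prop :=
  ∀ α : I, ∃ C : ℝ, ∀ β : J, ‖f α β‖ ≤ C

/-- The slice `f_β^{ij} ∈ F(I)` of `f ∈ F(I × J)`,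
so that `f(α,β) = Σ_{i,j} f_β^{ij}(α) ⊗ e_β^{ij}`. -/
def slice2 {I J : Type*} {n : I → ℕ} {m : J → ℕ} (f : FI2 n m) (β : J)
    (i j : Fin (m β)) : FI n :=
  fun α => Matrix.of fun k l => f α β (k, i) (l, j)

/-- The slice `f_β^{ij} ∈ F(I)` of `f ∈ F(J × I)`,
so that `f(β,α) = Σ_{i,j} e_β^{ij} ⊗ f_β^{ij}(α)`. -/
def slice1 {I J : Type*} {n : I → ℕ} {m : J → ℕ} (f : FI2 m n) (β : J)
    (i j : Fin (m β)) : FI n :=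
  fun α => Matrix.of fun k l => f β α (i, k) (j, l)

/-- `T ⊗̃ id : F(I × J) → F(I' × J)` for a map `T : F(I) → F(I')`. -/
def tenR {I I' J : Type*} {n : I → ℕ} {n' : I' → ℕ} {m : J → ℕ}
    (T : FI n → FI n') (f : FI2 n m) : FI2 n' m :=
  fun α' β => Matrix.of fun u v => T (slice2 f β u.2 v.2) α' u.1 v.1

/-- `id ⊗̃ T : F(J × I) → F(J × I')` for a map `T : F(I) → F(I')`. -/
def tenL {I I' J : Type*} {n : I → ℕ} {n' : I' → ℕ} {m : J → ℕ}
    (T : FI n → FI n') (f : FI2 m n) : FI2 m n' :=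
  fun β α' => Matrix.of fun u v => T (slice1 f β u.1 v.1) α' u.2 v.2

/-- `T ⊗̃ id : F(I × J) → F(I₁ × I₂ × J)` for a map `T : F(I) → F(I₁ × I₂)`. -/
def tenR2 {I I₁ I₂ J : Type*} {n : I → ℕ} {n₁ : I₁ → ℕ} {n₂ : I₂ → ℕ} {m : J → ℕ}
    (T : FI n → FI2 n₁ n₂) (f : FI2 n m) : FI3 n₁ n₂ m :=
  fun β₁ β₂ γ => Matrix.of fun u v =>
    T (slice2 f γ u.2.2 v.2.2) β₁ β₂ (u.1, u.2.1) (v.1, v.2.1)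

/-- `id ⊗̃ T : F(J × I) → F(J × I₁ × I₂)` for a map `T : F(I) → F(I₁ × I₂)`. -/
def tenL2 {I I₁ I₂ J : Type*} {n : I → ℕ} {n₁ : I₁ → ℕ} {n₂ : I₂ → ℕ} {m : J → ℕ}
    (T : FI n → FI2 n₁ n₂) (f : FI2 m n) : FI3 m n₁ n₂ :=
  fun γ β₁ β₂ => Matrix.of fun u v =>
    T (slice1 f γ u.1 v.1) β₁ β₂ u.2 v.2

open scoped Classical in
/-- Apply a functional defined on `F_b(I)` to an arbitrary element of `F(I)`,
extended by `0` off `F_b(I)`. -/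
noncomputable def apF {I : Type*} {n : I → ℕ} (𝔪 : Fb n →ₗ[ℂ] ℂ) (g : FI n) : ℂ :=
  if h : g ∈ Fb n then 𝔪 ⟨g, h⟩ else 0

/-- `𝔪 ⊗̃ id : F(I × J) → F(J)` for a functional `𝔪` on `F_b(I)`. -/
noncomputable def fTenR {I J : Type*} {n : I → ℕ} {m : J → ℕ}
    (𝔪 : Fb n →ₗ[ℂ] ℂ) (f : FI2 n m) : FI m :=
  fun β => Matrix.of fun i j => apF 𝔪 (slice2 f β i j)

/-- `id ⊗̃ 𝔪 : F(J × I) → F(J)` for a functional `𝔪` on `F_b(I)`. -/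
noncomputable def fTenL {I J : Type*} {n : I → ℕ} {m : J → ℕ}
    (𝔪 : Fb n →ₗ[ℂ] ℂ) (f : FI2 m n) : FI m :=
  fun β => Matrix.of fun i j => apF 𝔪 (slice1 f β i j)

/-- `𝔪 ⊗̃ id ⊗̃ id : F(I × J × K) → F(J × K)` for a functional `𝔪` on `F_b(I)`. -/
noncomputable def fTenR3 {I J K : Type*} {n : I → ℕ} {m : J → ℕ} {p : K → ℕ}
    (𝔪 : Fb n →ₗ[ℂ] ℂ) (f : FI3 n m p) : FI2 m p :=
  fun β γ => Matrix.of fun u v =>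
    apF 𝔪 (fun α => Matrix.of fun k l => f α β γ (k, u) (l, v))

/-- A state on the C*-algebra `F_b(I)`: a positive linear functional with `𝔪(1) = 1`. -/
def IsState {I : Type*} {n : I → ℕ} (𝔪 : Fb n →ₗ[ℂ] ℂ) : Prop :=
  (∀ g : FI n, g ∈ Fb n → 0 ≤ apF 𝔪 (star g * g)) ∧ apF 𝔪 1 = 1

/-- A comultiplication on the index system `(I, n)`, i.e. the structure of a
discrete quantum semigroup. `D α β γ` is the *-homomorphism
`Δ^α_{β,γ} : M_{n(α)} → M_{n(β)} ⊗ M_{n(γ)}`. -/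
structure Comul {I : Type*} (n : I → ℕ) where
  /-- the family of *-homomorphisms `Δ^α_{β,γ}` -/
  D : ∀ α β γ : I, Mat (n α) → Mat2 (n β) (n γ)
  linear : ∀ α β γ, IsLinearMap ℂ (D α β γ)
  map_mul' : ∀ α β γ x y, D α β γ (x * y) = D α β γ x * D α β γ y
  map_star' : ∀ α β γ x, D α β γ (star x) = star (D α β γ x)
  /-- condition (i): `Δ^α_{β,γ}(1) Δ^{α'}_{β,γ}(1) = 0` for `α ≠ α'` -/
  orth : ∀ β γ α α' : I, α ≠ α' → D α β γ 1 * D α' β γ 1 = 0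
  /-- for fixed `β, γ` only finitely many `Δ^α_{β,γ}` are nonzero
  (a consequence of condition (i), included as data) -/
  finite : ∀ β γ : I, {α : I | D α β γ ≠ 0}.Finite
  /-- condition (ii): coassociativity
  `Σ_ω (Δ^ω_{α,β} ⊗ id) ∘ Δ^λ_{ω,γ} = Σ_ω (id ⊗ Δ^ω_{β,γ}) ∘ Δ^λ_{α,ω}`,
  written entrywise. -/
  coassoc : ∀ (lam α β γ : I) (x : Mat (n lam)) (p p' : Fin (n α))
      (q q' : Fin (n β)) (r r' : Fin (n γ)),
      ∑ᶠ ω : I, D ω α β (Matrix.of fun k l => D lam ω γ x (k, r) (l, r')) (p, q) (p', q')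
        = ∑ᶠ ω : I, D ω β γ (Matrix.of fun k l => D lam α ω x (p, k) (p', l)) (q, r) (q', r')

/-- The induced *-homomorphism `Δ : F(I) → F(I × I)`,
`[Δ(f)](β,γ) = Σ_α Δ^α_{β,γ}(f(α))`. -/
noncomputable def Comul.ind {I : Type*} {n : I → ℕ} (C : Comul n) (f : FI n) :
    FI2 n n :=
  fun β γ => ∑ᶠ α : I, C.D α β γ (f α)

/-- A right invariant mean for a discrete quantum semigroup: a state `𝔪` on
`F_b(𝔾)` with `(𝔪 ⊗̃ id)(Δ f) = 𝔪(f)·1` for all `f ∈ F_b(𝔾)`. -/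
def IsRIMean {I : Type*} {n : I → ℕ} (C : Comul n) (𝔪 : Fb n →ₗ[ℂ] ℂ) : Prop :=
  IsState 𝔪 ∧ ∀ f : FI n, f ∈ Fb n →
    fTenR 𝔪 (C.ind f) = fun γ => apF 𝔪 f • (1 : Mat (n γ))

/-- A left invariant mean for a discrete quantum semigroup: a state `𝔪` on
`F_b(𝔾)` with `(id ⊗̃ 𝔪)(Δ f) = 𝔪(f)·1` for all `f ∈ F_b(𝔾)`. -/
def IsLIMean {I : Type*} {n : I → ℕ} (C : Comul n) (𝔪 : Fb n →ₗ[ℂ] ℂ) : Prop :=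
  IsState 𝔪 ∧ ∀ f : FI n, f ∈ Fb n →
    fTenL 𝔪 (C.ind f) = fun γ => apF 𝔪 f • (1 : Mat (n γ))

/-- A *-homomorphism between function algebras: a linear, multiplicative,
star-preserving map. -/
def IsStarHom {I J : Type*} {n : I → ℕ} {m : J → ℕ} (T : FI n → FI m) : Prop :=
  IsLinearMap ℂ T ∧ (∀ f g, T (f * g) = T f * T g) ∧ ∀ f, T (star f) = star (T f)

open scoped Classical in
/-- Apply a map defined on `F_b(I)` to an arbitrary element of `F(I)`,
extended by `0` off `F_b(I)`. -/
noncomputable def apTb {I J : Type*} {n : I → ℕ} {m : J → ℕ}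
    (T : Fb n → FI m) (g : FI n) : FI m :=
  if h : g ∈ Fb n then T ⟨g, h⟩ else 0

/-- `T ⊗̃ id : F_{b:1}(I × J) → F(I' × J)` for a map `T` defined on `F_b(I)`. -/
noncomputable def tenRb {I I' J : Type*} {n : I → ℕ} {n' : I' → ℕ} {m : J → ℕ}
    (T : Fb n → FI n') (f : FI2 n m) : FI2 n' m :=
  fun α' β => Matrix.of fun u v => apTb T (slice2 f β u.2 v.2) α' u.1 v.1

open scoped Classical in
/-- The canonical embedding `I_α : M_{n(α)} → F(I)` as functions supported at `α`:
`emb α x` is the element of `F(I)` that is `x` at `α` and `0` elsewhere. -/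
noncomputable def emb {I : Type*} {n : I → ℕ} (α : I) (x : Mat (n α)) : FI n :=
  Function.update (0 : FI n) α x

/-- The canonical identification `ℂ = M_1(ℂ) → M_1(ℂ) ⊗ M_1(ℂ)` (the identity map). -/
def e11 : Mat 1 → Mat2 1 1 := fun x => Matrix.of fun u v => x u.1 v.1

/-- The C*-algebra `ℓ∞(G)` of bounded complex-valued functions on `G`,
as a subspace of all complex-valued functions. -/
noncomputable def Fbc (G : Type*) : Submodule ℂ (G → ℂ) where
  carrier := {f | ∃ C : ℝ, ∀ x, ‖f x‖ ≤ C}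
  zero_mem' := ⟨0, fun x => by simp⟩
  add_mem' := by
    rintro f g ⟨C, hC⟩ ⟨D, hD⟩
    exact ⟨C + D, fun x => (norm_add_le _ _).trans (add_le_add (hC x) (hD x))⟩
  smul_mem' := by
    rintro c f ⟨C, hC⟩
    exact ⟨‖c‖ * C, fun x => by
      rw [Pi.smul_apply, norm_smul]
      exact mul_le_mul_of_nonneg_left (hC x) (norm_nonneg c)⟩

open scoped Classical in
/-- Apply a functional defined on `ℓ∞(G)` to an arbitrary function,
extended by `0` off `ℓ∞(G)`. -/
noncomputable def apC {G : Type*} (m : Fbc G →ₗ[ℂ] ℂ) (g : G → ℂ) : ℂ :=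
  if h : g ∈ Fbc G then m ⟨g, h⟩ else 0

/-- A state on the C*-algebra `ℓ∞(G)`: a positive linear functional
taking the value `1` at the constant function `1`. -/
def IsCState {G : Type*} (m : Fbc G →ₗ[ℂ] ℂ) : Prop :=
  (∀ g : G → ℂ, g ∈ Fbc G → 0 ≤ apC m (star g * g)) ∧ apC m 1 = 1

end DQSG

/-!
Since `Δ(f) - f ⊗ 1 = h + 1 ⊗ f` and `(𝔪 ⊗̃ id)(1 ⊗ f) = 𝔪(1) f = f`, we have
`F - f = (𝔪 ⊗̃ id)(h)`, so it suffices that the slice map of a state is contractive.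
Writing `X_x : v ↦ v ⊗ x`, one has `⟪y, (𝔪 ⊗̃ id)(h)(γ) x⟫ = 𝔪(β ↦ X_y^* h(β,γ) X_x)`, and a
state satisfies `|𝔪(a)| ≤ sup_β ‖a(β)‖`: after rotating `a` so that `𝔪(a) ≥ 0`, only its real
part `b` contributes, and if `‖b‖ ≤ c` then `c - b = s^* s` with `s` the pointwise square root,
so positivity gives `𝔪(b) ≤ c`.
-/

section MatrixLemmas

open Matrix

variable {l n : Type*} [Fintype l] [DecidableEq l] [Fintype n]

def Matrix.oneKroneckerStarAlgHom [DecidableEq n] :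
    Matrix n n ℂ →⋆ₐ[ℂ] Matrix (l × n) (l × n) ℂ where
  toFun B := 1 ⊗ₖ B
  map_one' := one_kronecker_one
  map_mul' A B := by rw [← mul_kronecker_mul, one_mul]
  map_zero' := kronecker_zero _
  map_add' := kronecker_add _
  commutes' r := by
    simp only [Algebra.algebraMap_eq_smul_one, kronecker_smul, one_kronecker_one]
  map_star' B := by simp [star_eq_conjTranspose, conjTranspose_kronecker]

lemma Matrix.norm_one_kronecker_le [DecidableEq n] (B : Matrix n n ℂ) :
    ‖(1 : Matrix l l ℂ) ⊗ₖ B‖ ≤ ‖B‖ :=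
  NonUnitalStarAlgHom.norm_apply_le (oneKroneckerStarAlgHom (l := l)) B

lemma Matrix.l2_opNorm_one_le : ‖(1 : Matrix l l ℂ)‖ ≤ 1 := by
  rw [cstar_norm_def, map_one]
  exact ContinuousLinearMap.norm_id_le

/-- The matrix of `v ↦ v ⊗ x : ℂ^l → ℂ^l ⊗ ℂ^n`. -/
def Matrix.tensorVec (l : Type*) [DecidableEq l] (x : EuclideanSpace ℂ n) :
    Matrix (l × n) l ℂ :=
  of fun p k => if p.1 = k then x p.2 else 0

lemma Matrix.conjTranspose_tensorVec_mul_self (x : EuclideanSpace ℂ n) :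
    (tensorVec l x)ᴴ * tensorVec l x = ((‖x‖ ^ 2 : ℝ) : ℂ) • (1 : Matrix l l ℂ) := by
  ext k k'
  simp only [mul_apply, conjTranspose_apply, tensorVec, of_apply, Fintype.sum_prod_type,
    smul_apply, one_apply, EuclideanSpace.norm_sq_eq]
  by_cases hk : k = k'
  · subst hk
    simp [RCLike.conj_mul]
  · simp [hk, Ne.symm hk]

lemma Matrix.norm_tensorVec_le [DecidableEq n] (x : EuclideanSpace ℂ n) :
    ‖tensorVec l x‖ ≤ ‖x‖ := by
  rw [mul_self_le_mul_self_iff (norm_nonneg _) (norm_nonneg _),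
    ← l2_opNorm_conjTranspose_mul_self, conjTranspose_tensorVec_mul_self, norm_smul,
    Complex.norm_real, Real.norm_of_nonneg (sq_nonneg _), sq]
  exact mul_le_of_le_one_right (by positivity) l2_opNorm_one_le

lemma Matrix.norm_compress_le [DecidableEq n] (H : Matrix (l × n) (l × n) ℂ)
    (y x : EuclideanSpace ℂ n) :
    ‖(tensorVec l y)ᴴ * H * tensorVec l x‖ ≤ ‖y‖ * ‖H‖ * ‖x‖ := by
  calc ‖(tensorVec l y)ᴴ * H * tensorVec l x‖
      ≤ ‖(tensorVec l y)ᴴ‖ * ‖H‖ * ‖tensorVec l x‖ :=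
        (l2_opNorm_mul _ _).trans (by gcongr; exact l2_opNorm_mul _ _)
    _ ≤ ‖y‖ * ‖H‖ * ‖x‖ := by
        rw [l2_opNorm_conjTranspose]
        gcongr <;> exact norm_tensorVec_le _

lemma Matrix.compress_apply (H : Matrix (l × n) (l × n) ℂ) (y x : EuclideanSpace ℂ n) (k k' : l) :
    ((tensorVec l y)ᴴ * H * tensorVec l x) k k'
      = ∑ i, ∑ j, star (y i) * x j * H (k, i) (k', j) := by
  simp only [tensorVec, mul_apply, conjTranspose_apply, of_apply, apply_ite, RCLike.star_def,
    star_zero, ite_mul, zero_mul, Fintype.sum_prod_type, Finset.sum_ite_irrel,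
    Finset.sum_const_zero, Finset.sum_ite_eq', Finset.mem_univ, ↓reduceIte, Finset.sum_mul,
    mul_zero]
  rw [Finset.sum_comm]
  exact Finset.sum_congr rfl fun i _ => Finset.sum_congr rfl fun j _ => by ring

end MatrixLemmas

section PiRealPart

open scoped ComplexStarModule

variable {ι : Type*} {A : ι → Type*} [∀ i, AddCommGroup (A i)] [∀ i, StarAddMonoid (A i)]
  [∀ i, Module ℂ (A i)] [∀ i, StarModule ℂ (A i)]

lemma Pi.realPart_apply (a : ∀ i, A i) (i : ι) : (ℜ a : ∀ i, A i) i = ℜ (a i) := by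
  simp only [realPart_apply_coe]
  rfl

lemma Pi.imaginaryPart_apply (a : ∀ i, A i) (i : ι) : (ℑ a : ∀ i, A i) i = ℑ (a i) := by
  simp only [imaginaryPart_apply_coe]
  rfl

end PiRealPart

namespace DQSG

section Functional

open scoped ComplexStarModule

variable {I : Type*} {n : I → ℕ} {𝔪 : Fb n →ₗ[ℂ] ℂ}

lemma apF_of_mem {a : FI n} (ha : a ∈ Fb n) : apF 𝔪 a = 𝔪 ⟨a, ha⟩ := dif_pos ha

lemma one_mem_Fb : (1 : FI n) ∈ Fb n := ⟨1, fun _ => Matrix.l2_opNorm_one_le⟩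

lemma apF_add {a b : FI n} (ha : a ∈ Fb n) (hb : b ∈ Fb n) :
    apF 𝔪 (a + b) = apF 𝔪 a + apF 𝔪 b := by
  rw [apF_of_mem ha, apF_of_mem hb, apF_of_mem (add_mem ha hb), ← map_add]
  rfl

lemma apF_sub {a b : FI n} (ha : a ∈ Fb n) (hb : b ∈ Fb n) :
    apF 𝔪 (a - b) = apF 𝔪 a - apF 𝔪 b := by
  rw [apF_of_mem ha, apF_of_mem hb, apF_of_mem (sub_mem ha hb), ← map_sub]
  rfl

lemma apF_smul (z : ℂ) {a : FI n} (ha : a ∈ Fb n) : apF 𝔪 (z • a) = z * apF 𝔪 a := by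
  rw [apF_of_mem ha, apF_of_mem (Submodule.smul_mem _ z ha), ← smul_eq_mul, ← map_smul]
  rfl

lemma apF_sum {ι : Type*} (s : Finset ι) {a : ι → FI n} (ha : ∀ i ∈ s, a i ∈ Fb n) :
    apF 𝔪 (∑ i ∈ s, a i) = ∑ i ∈ s, apF 𝔪 (a i) := by
  have hsum : (⟨∑ i ∈ s, a i, Submodule.sum_mem _ ha⟩ : Fb n)
      = ∑ i ∈ s.attach, ⟨a i, ha i i.2⟩ := by
    ext1
    simp [Finset.sum_attach s a]
  rw [apF_of_mem (Submodule.sum_mem _ ha), hsum, map_sum, ← Finset.sum_attach s]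
  exact Finset.sum_congr rfl fun i _ => (apF_of_mem _).symm

open scoped MatrixOrder in
lemma exists_star_mul_self_eq_sub {b : FI n} (hb : IsSelfAdjoint b) {c : ℝ}
    (hc : ∀ γ, ‖b γ‖ ≤ c) : ∃ s ∈ Fb n, star s * s = (c : ℂ) • 1 - b := by
  have hnonneg : ∀ γ, 0 ≤ (c : ℂ) • (1 : Mat (n γ)) - b γ := fun γ => by
    rw [sub_nonneg, Complex.coe_smul, ← Algebra.algebraMap_eq_smul_one]
    exact ((hb.apply γ).le_algebraMap_norm_self).trans (algebraMap_mono _ (hc γ))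
  refine ⟨fun γ => CFC.sqrt ((c : ℂ) • 1 - b γ), ⟨√(2 * c), fun γ => ?_⟩, ?_⟩
  · rw [CFC.norm_sqrt _ (hnonneg γ)]
    gcongr
    have hc₀ : 0 ≤ c := (norm_nonneg _).trans (hc γ)
    calc ‖(c : ℂ) • (1 : Mat (n γ)) - b γ‖
        ≤ ‖(c : ℂ) • (1 : Mat (n γ))‖ + ‖b γ‖ := norm_sub_le _ _
      _ ≤ c * 1 + c := by
        rw [norm_smul, Complex.norm_real, Real.norm_of_nonneg hc₀]
        gcongr
        exacts [Matrix.l2_opNorm_one_le, hc γ]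
      _ = 2 * c := by ring
  · funext γ
    change star (CFC.sqrt _) * CFC.sqrt _ = (c : ℂ) • (1 : Mat (n γ)) - b γ
    rw [(CFC.sqrt_nonneg _).isSelfAdjoint.star_eq, CFC.sqrt_mul_sqrt_self _ (hnonneg γ)]

lemma IsState.im_eq_zero_and_re_le (hst : IsState 𝔪) {b : FI n}
    (hb : IsSelfAdjoint b) {c : ℝ} (hc : ∀ γ, ‖b γ‖ ≤ c) :
    (apF 𝔪 b).im = 0 ∧ (apF 𝔪 b).re ≤ c := by
  obtain ⟨s, hs, hss⟩ := exists_star_mul_self_eq_sub hb hc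
  have hpos := hst.1 s hs
  rw [hss, apF_sub (Submodule.smul_mem _ _ one_mem_Fb) ⟨c, hc⟩, apF_smul _ one_mem_Fb, hst.2,
    mul_one, Complex.nonneg_iff] at hpos
  simp only [Complex.sub_re, Complex.ofReal_re, Complex.sub_im, Complex.ofReal_im] at hpos
  constructor <;> linarith [hpos.1, hpos.2]

lemma IsState.norm_apF_le (hst : IsState 𝔪) {a : FI n} {c : ℝ}
    (ha : ∀ γ, ‖a γ‖ ≤ c) : ‖apF 𝔪 a‖ ≤ c := by
  set z := apF 𝔪 a
  set u := Complex.exp (↑(-z.arg) * Complex.I)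
  have hu : ‖u‖ = 1 := Complex.norm_exp_ofReal_mul_I _
  have huz : u * z = ‖z‖ := by
    conv_lhs => rw [← Complex.norm_mul_exp_arg_mul_I z]
    rw [mul_left_comm, ← Complex.exp_add]
    simp
  set a' := u • a
  have ha' : ∀ γ, ‖a' γ‖ ≤ c := fun γ => by
    change ‖u • a γ‖ ≤ c
    rw [norm_smul, hu, one_mul]
    exact ha γ
  have hre : ∀ γ, ‖(ℜ a' : FI n) γ‖ ≤ c := fun γ => by
    rw [Pi.realPart_apply]
    exact (realPart.norm_le _).trans (ha' γ)
  have him : ∀ γ, ‖(ℑ a' : FI n) γ‖ ≤ c := fun γ => by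
    rw [Pi.imaginaryPart_apply]
    exact (imaginaryPart.norm_le _).trans (ha' γ)
  have hsplit : apF 𝔪 a' = apF 𝔪 (ℜ a' : FI n) + Complex.I * apF 𝔪 (ℑ a' : FI n) := by
    rw [← apF_smul _ ⟨c, him⟩, ← apF_add ⟨c, hre⟩ (Submodule.smul_mem _ _ ⟨c, him⟩),
      realPart_add_I_smul_imaginaryPart]
  have hz : ‖z‖ = (apF 𝔪 (ℜ a' : FI n)).re - (apF 𝔪 (ℑ a' : FI n)).im := by
    rw [← Complex.ofReal_re ‖z‖, ← huz, ← apF_smul _ ⟨c, ha⟩, hsplit]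
    simp [sub_eq_add_neg]
  rw [hz, (hst.im_eq_zero_and_re_le (ℑ a').2 him).1, sub_zero]
  exact (hst.im_eq_zero_and_re_le (ℜ a').2 hre).2

end Functional

section Slice

variable {I J : Type*} {n : I → ℕ} {m : J → ℕ} {𝔪 : Fb n →ₗ[ℂ] ℂ}

open Matrix

lemma slice2_apply_eq_compress (h : FI2 n m) (γ : J) (i j : Fin (m γ)) (β : I) :
    slice2 h γ i j β = (tensorVec (Fin (n β)) (EuclideanSpace.single i 1))ᴴ * h β γ
      * tensorVec (Fin (n β)) (EuclideanSpace.single j 1) := by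
  ext k l
  simp [slice2, compress_apply]

lemma norm_slice2_apply_le (h : FI2 n m) (γ : J) (i j : Fin (m γ)) (β : I) :
    ‖slice2 h γ i j β‖ ≤ ‖h β γ‖ := by
  simpa [slice2_apply_eq_compress] using norm_compress_le (h β γ) (EuclideanSpace.single i 1)
    (EuclideanSpace.single j 1)

lemma slice2_mem_Fb {h : FI2 n m} {γ : J} {C : ℝ} (hC : ∀ β, ‖h β γ‖ ≤ C) (i j : Fin (m γ)) :
    slice2 h γ i j ∈ Fb n :=
  ⟨C, fun β => (norm_slice2_apply_le h γ i j β).trans (hC β)⟩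

lemma inner_fTenR_eq {h : FI2 n m} {γ : J} {C : ℝ} (hC : ∀ β, ‖h β γ‖ ≤ C)
    (y x : EuclideanSpace ℂ (Fin (m γ))) :
    inner ℂ y (toEuclideanCLM (𝕜 := ℂ) (fTenR 𝔪 h γ) x)
      = apF 𝔪 (fun β => (tensorVec (Fin (n β)) y)ᴴ * h β γ * tensorVec (Fin (n β)) x) := by
  have hsum : (fun β => (tensorVec (Fin (n β)) y)ᴴ * h β γ * tensorVec (Fin (n β)) x)
      = ∑ i, ∑ j, (star (y i) * x j) • slice2 h γ i j := by
    funext β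
    ext k l
    simp [compress_apply, slice2, Finset.sum_apply, Matrix.sum_apply]
  rw [hsum, apF_sum _ fun i _ => Submodule.sum_mem _ fun j _ =>
    Submodule.smul_mem _ _ (slice2_mem_Fb hC i j)]
  simp only [EuclideanSpace.inner_eq_star_dotProduct, ofLp_toEuclideanCLM, dotProduct, mulVec,
    Finset.sum_mul]
  refine Finset.sum_congr rfl fun i _ => ?_
  rw [apF_sum _ fun j _ => Submodule.smul_mem _ _ (slice2_mem_Fb hC i j)]
  refine Finset.sum_congr rfl fun j _ => ?_
  rw [apF_smul _ (slice2_mem_Fb hC i j)]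
  change apF 𝔪 (slice2 h γ i j) * x j * star (y i) = _
  ring

lemma IsState.norm_fTenR_le (hst : IsState 𝔪) {h : FI2 n m} {γ : J} {C : ℝ} (hC₀ : 0 ≤ C)
    (hC : ∀ β, ‖h β γ‖ ≤ C) : ‖fTenR 𝔪 h γ‖ ≤ C := by
  rw [l2_opNorm_def]
  refine ContinuousLinearMap.opNorm_le_of_re_inner_le hC₀ fun x y hx hy => ?_
  calc RCLike.re (inner ℂ (toEuclideanCLM (𝕜 := ℂ) (fTenR 𝔪 h γ) x) y)
      = RCLike.re (inner ℂ y (toEuclideanCLM (𝕜 := ℂ) (fTenR 𝔪 h γ) x)) := inner_re_symm _ _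
    _ ≤ ‖apF 𝔪 (fun β => (tensorVec (Fin (n β)) y)ᴴ * h β γ * tensorVec (Fin (n β)) x)‖ := by
      rw [← inner_fTenR_eq hC]
      exact RCLike.re_le_norm _
    _ ≤ C := hst.norm_apF_le fun β =>
      (norm_compress_le (h β γ) y x).trans (by rw [hx, hy, one_mul, mul_one]; exact hC β)

lemma fTenR_add_one_kronecker (h𝔪 : apF 𝔪 1 = 1) {g h : FI2 n m} {γ : J} {C : ℝ}
    (hC : ∀ β, ‖h β γ‖ ≤ C) {B : Mat (m γ)} (hg : ∀ β, g β γ = h β γ + 1 ⊗ₖ B) :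
    fTenR 𝔪 g γ = fTenR 𝔪 h γ + B := by
  have hslice : ∀ i j, slice2 g γ i j = slice2 h γ i j + B i j • 1 := fun i j => by
    funext β
    ext k l
    simp [slice2, hg, one_apply, mul_comm]
  ext i j
  change apF 𝔪 (slice2 g γ i j) = apF 𝔪 (slice2 h γ i j) + B i j
  rw [hslice, apF_add (slice2_mem_Fb hC i j) (Submodule.smul_mem _ _ one_mem_Fb),
    apF_smul _ one_mem_Fb, h𝔪, mul_one]

end Slice

theorem stmt_15_general {I : Type*} (n : I → ℕ) (C : Comul n)
    (𝔪 : Fb n →ₗ[ℂ] ℂ) (h𝔪 : IsRIMean C 𝔪)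
    (f : FI n) (g h : FI2 n n)
    (hgdef : ∀ β γ : I, g β γ = C.ind f β γ - f β ⊗ₖ (1 : Mat (n γ)))
    (hhdef : ∀ β γ : I, h β γ
      = C.ind f β γ - f β ⊗ₖ (1 : Mat (n γ)) - (1 : Mat (n β)) ⊗ₖ f γ)
    (hb : ∃ Ch : ℝ, ∀ β γ : I, ‖h β γ‖ ≤ Ch) :
    Fb1 g ∧
    ∀ Ch : ℝ, (∀ β γ : I, ‖h β γ‖ ≤ Ch) →
      ∀ γ : I, ‖fTenR 𝔪 g γ - f γ‖ ≤ Ch := by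
  obtain ⟨Ch₀, hCh₀⟩ := hb
  have hgh : ∀ β γ, g β γ = h β γ + 1 ⊗ₖ f γ := fun β γ => by
    rw [hgdef, hhdef]
    abel
  refine ⟨fun γ => ⟨Ch₀ + ‖f γ‖, fun β => ?_⟩, fun Ch hCh γ => ?_⟩
  · rw [hgh]
    exact (norm_add_le _ _).trans (add_le_add (hCh₀ β γ) (Matrix.norm_one_kronecker_le _))
  · rw [fTenR_add_one_kronecker h𝔪.1.2 (hCh · γ) (hgh · γ), add_sub_cancel_right]
    exact h𝔪.1.norm_fTenR_le ((norm_nonneg _).trans (hCh γ γ)) (hCh · γ)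

/-- If `Δ(f) - f ⊗ 1 - 1 ⊗ f` is bounded then `Δ(f) - f ⊗ 1 ∈ F_{b:1}(𝔾 × 𝔾)` and
`F = (𝔪 ⊗̃ id)(Δ(f) - f ⊗ 1)` satisfies `sup ‖F - f‖ ≤ sup ‖Δ(f) - f ⊗ 1 - 1 ⊗ f‖`. -/
theorem stmt_15 {I : Type*} (n : I → ℕ) (hn : ∀ γ, 0 < n γ) (C : Comul n)
    (𝔪 : Fb n →ₗ[ℂ] ℂ) (h𝔪 : IsRIMean C 𝔪)
    (f : FI n) (g h : FI2 n n)
    (hgdef : ∀ β γ : I, g β γ = C.ind f β γ - f β ⊗ₖ (1 : Mat (n γ)))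
    (hhdef : ∀ β γ : I, h β γ
      = C.ind f β γ - f β ⊗ₖ (1 : Mat (n γ)) - (1 : Mat (n β)) ⊗ₖ f γ)
    (hb : ∃ Ch : ℝ, ∀ β γ : I, ‖h β γ‖ ≤ Ch) :
    Fb1 g ∧
    ∀ Ch : ℝ, (∀ β γ : I, ‖h β γ‖ ≤ Ch) →
      ∀ γ : I, ‖fTenR 𝔪 g γ - f γ‖ ≤ Ch :=
  stmt_15_general n C 𝔪 h𝔪 f g h hgdef hhdef hb

end DQSG
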